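/- arXiv:0904.1312 — 2 statements merged into one kernel-verified Lean document; each statement's English description precedes it below -/
import Mathlib

section
/- Variance due to a randomized starting point: under the positive Ricci curvature assumption with constant κ ∈ (0,1], let μ be a probability measure on 𝒳 with ∬ d(x,y)² μ(dx) μ(dy) < ∞, let f : 𝒳 → ℝ be 1-Lipschitz, and for integers T₀ ≥ 0, T ≥ 1 define g(x) := E_x π̂(f) = (1/T) ∑_{k=T₀+1}^{T₀+T} P^k f(x). Then the variance of g under μ satisfies Var_{X₀∼μ}[ g(X₀) ] ≤ ((1−κ)^{2(T₀+1)} / (2κ²T²)) ∬ d(x,y)² μ(dx) μ(dy). -/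
open MeasureTheory ENNReal
open scoped NNReal

noncomputable section

variable {X : Type*} [MetricSpace X] [MeasurableSpace X]

/-- The L¹ Wasserstein distance between two measures on a metric space,
defined as the infimum of the transport cost over all couplings. -/
def W1 (μ ν : Measure X) : ℝ≥0∞ :=
  ⨅ (ξ : Measure (X × X)) (_ : ξ.map Prod.fst = μ) (_ : ξ.map Prod.snd = ν),
    ∫⁻ p, edist p.1 p.2 ∂ξ

/-- The Markov kernel `P` has (coarse) Ricci curvature at least `κ`:
`W₁(P_x, P_y) ≤ (1-κ) d(x,y)` for all `x, y`. -/
def PosCurvature (P : X → Measure X) (κ : ℝ) : Prop :=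
  ∀ x y : X, W1 (P x) (P y) ≤ ENNReal.ofReal ((1 - κ) * dist x y)

/-- `N`-step transition kernel: `stepN P 0 x = δ_x` and
`stepN P (N+1) x = ∫ P_z(dy) (stepN P N x)(dz)`. -/
def stepN (P : X → Measure X) : ℕ → X → Measure X
  | 0 => fun x => Measure.dirac x
  | n + 1 => fun x => (stepN P n x).bind P

/-- Iterated averaging operator `P^N f (x) = ∫ f d(P_x^N)`. -/
def avgN (P : X → Measure X) (n : ℕ) (f : X → ℝ) (x : X) : ℝ :=
  ∫ y, f y ∂(stepN P n x)

/-- Law of the trajectory `(X_1, …, X_n)` of the Markov chain started at `x`. -/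
def pathLaw (P : X → Measure X) : (n : ℕ) → X → Measure (Fin n → X)
  | 0 => fun _ => Measure.dirac (fun i : Fin 0 => i.elim0)
  | n + 1 => fun x => (P x).bind fun y => (pathLaw P n y).map (fun p => Fin.cons y p)

/-- Empirical mean `π̂(f) = (1/T) ∑_{k=T₀+1}^{T₀+T} f(X_k)`, as a function of the
trajectory `(X_1, …, X_{T₀+T})`. -/
def empMean (f : X → ℝ) (T₀ T : ℕ) (p : Fin (T₀ + T) → X) : ℝ :=
  (1 / (T : ℝ)) * ∑ i : Fin (T₀ + T), if T₀ ≤ (i : ℕ) then f (p i) else 0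

/-- Expectation `E_x π̂(f)` of the empirical mean for the chain started at `x`. -/
def empExp (P : X → Measure X) (f : X → ℝ) (T₀ T : ℕ) (x : X) : ℝ :=
  ∫ p, empMean f T₀ T p ∂(pathLaw P (T₀ + T) x)

/-- Variance `Var_x π̂(f)` of the empirical mean for the chain started at `x`. -/
def empVar (P : X → Measure X) (f : X → ℝ) (T₀ T : ℕ) (x : X) : ℝ :=
  ∫ p, (empMean f T₀ T p - empExp P f T₀ T x) ^ 2 ∂(pathLaw P (T₀ + T) x)

/-- Lipschitz seminorm `‖f‖_Lip = sup_{x ≠ y} |f(x) - f(y)|/d(x,y)`, as the least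
Lipschitz constant of `f`. -/
def lipNorm (f : X → ℝ) : ℝ :=
  sInf {K : ℝ | ∀ x y : X, |f x - f y| ≤ K * dist x y}

/-- Coarse diffusion constant `σ(x)² = ½ ∬ d(y,z)² P_x(dy) P_x(dz)`. -/
def diffSq (P : X → Measure X) (x : X) : ℝ :=
  (1 / 2) * ∫ y, ∫ z, dist y z ^ 2 ∂(P x) ∂(P x)

/-- Local dimension `n_x`. -/
def localDim (P : X → Measure X) (x : X) : ℝ :=
  sInf {r : ℝ | ∃ f : X → ℝ, (∃ K : ℝ≥0, LipschitzWith K f) ∧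
    (∫ y, ∫ z, |f y - f z| ^ 2 ∂(P x) ∂(P x)) ≠ 0 ∧
    r = (∫ y, ∫ z, dist y z ^ 2 ∂(P x) ∂(P x)) /
        (∫ y, ∫ z, |f y - f z| ^ 2 ∂(P x) ∂(P x))}

/-- Support of a measure: the set of points all of whose open neighborhoods have
positive measure. -/
def msupp (μ : Measure X) : Set X :=
  {x : X | ∀ U : Set X, IsOpen U → x ∈ U → μ U ≠ 0}

/-- Granularity `σ_∞ = ½ sup_x diam (supp P_x)`, valued in `ℝ≥0∞`. -/
def granularity (P : X → Measure X) : ℝ≥0∞ :=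
  (1 / 2) * ⨆ x : X, EMetric.diam (msupp (P x))

/-- Eccentricity `E(x) = ∫ d(x,y) π(dy)`. -/
def ecc (π : Measure X) (x : X) : ℝ := ∫ y, dist x y ∂π

/-!
Curvature makes `x ↦ ∫ f dP_x` a `(1 - κ) L`-Lipschitz function whenever `f` is `L`-Lipschitz:
integrate `f(y) - f(y')` against a near-optimal coupling of `P_x` and `P_y`. Iterating, `P^k f` is
`(1 - κ)^k`-Lipschitz, and summing the geometric series the time average `g` is
`(1 - κ)^(T₀+1) / (κ T)`-Lipschitz. For a `C`-Lipschitz `g` and independent `X, Y ∼ μ`,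
`2 Var g(X) = Var (g X - g Y) ≤ E (g X - g Y)² ≤ C² E d(X, Y)²`. The same coupling argument
propagates finite first moments along the chain, which keeps every integral finite.
-/

open ProbabilityTheory

theorem integral_bind {α β E : Type*} [MeasurableSpace α] [MeasurableSpace β]
    [NormedAddCommGroup E] [NormedSpace ℝ E] {κ : α → Measure β} (hκ : Measurable κ)
    [∀ a, IsProbabilityMeasure (κ a)] {ν : Measure α} [SFinite ν] {f : β → E}
    (hf : Integrable f (ν.bind κ)) :
    ∫ y, f y ∂(ν.bind κ) = ∫ x, ∫ y, f y ∂κ x ∂ν := by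
  let K : Kernel α β := ⟨κ, hκ⟩
  have : IsMarkovKernel K := ⟨‹_›⟩
  have hK : ν.bind κ = ν.bind K := rfl
  rw [hK, Measure.comp_eq_comp_const_apply] at hf ⊢
  rw [Kernel.integral_comp hf, Kernel.const_apply]
  rfl

section Wasserstein

variable {E : Type*} [NormedAddCommGroup E]

theorem LipschitzWith.integrable_of_lintegral_edist_ne_top [OpensMeasurableSpace X]
    [SecondCountableTopologyEither X E] {f : X → E} {L : ℝ≥0} (hf : LipschitzWith L f)
    {ν : Measure X} [IsFiniteMeasure ν] {y : X} (hy : ∫⁻ z, edist y z ∂ν ≠ ⊤) :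
    Integrable f ν := by
  refine ⟨hf.continuous.aestronglyMeasurable, ?_⟩
  have hbound (z : X) : ‖f z‖ₑ ≤ ‖f y‖ₑ + L * edist y z :=
    calc ‖f z‖ₑ = ‖f y + (f z - f y)‖ₑ := by rw [add_sub_cancel]
      _ ≤ ‖f y‖ₑ + ‖f z - f y‖ₑ := enorm_add_le _ _
      _ ≤ ‖f y‖ₑ + L * edist y z := by
        rw [← edist_eq_enorm_sub, edist_comm]; exact add_le_add le_rfl (hf y z)
  calc ∫⁻ z, ‖f z‖ₑ ∂ν ≤ ∫⁻ z, (‖f y‖ₑ + L * edist y z) ∂ν := lintegral_mono hbound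
    _ = ‖f y‖ₑ * ν Set.univ + L * ∫⁻ z, edist y z ∂ν := by
      rw [lintegral_add_left measurable_const, lintegral_const, lintegral_const_mul' _ _ coe_ne_top]
    _ < ⊤ := ENNReal.add_lt_top.2 ⟨ENNReal.mul_lt_top enorm_lt_top (measure_lt_top _ _),
      ENNReal.mul_lt_top coe_lt_top hy.lt_top⟩

theorem enorm_integral_sub_integral_le_of_coupling [NormedSpace ℝ E] {f : X → E} {L : ℝ≥0}
    (hf : LipschitzWith L f) {ξ : Measure (X × X)} (hμ : Integrable f (ξ.map Prod.fst))
    (hν : Integrable f (ξ.map Prod.snd)) :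
    ‖∫ x, f x ∂(ξ.map Prod.fst) - ∫ x, f x ∂(ξ.map Prod.snd)‖ₑ ≤
      L * ∫⁻ p, edist p.1 p.2 ∂ξ := by
  have h₁ : Integrable (fun p : X × X => f p.1) ξ := hμ.comp_measurable measurable_fst
  have h₂ : Integrable (fun p : X × X => f p.2) ξ := hν.comp_measurable measurable_snd
  rw [integral_map measurable_fst.aemeasurable hμ.1, integral_map measurable_snd.aemeasurable hν.1,
    ← integral_sub h₁ h₂, ← lintegral_const_mul' _ _ coe_ne_top]
  refine (enorm_integral_le_lintegral_enorm _).trans (lintegral_mono fun p => ?_)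
  rw [← edist_eq_enorm_sub]
  exact hf p.1 p.2

theorem enorm_integral_sub_integral_le_mul_W1 [NormedSpace ℝ E] {f : X → E} {L : ℝ≥0}
    (hf : LipschitzWith L f) {μ ν : Measure X} [IsProbabilityMeasure μ] [IsProbabilityMeasure ν]
    (hμ : Integrable f μ) (hν : Integrable f ν) :
    ‖∫ x, f x ∂μ - ∫ x, f x ∂ν‖ₑ ≤ L * W1 μ ν := by
  rcases eq_or_ne L 0 with rfl | hL
  · -- no `mul_iInf` for `L = 0`; the product coupling bounds the difference by `0` instead
    have := enorm_integral_sub_integral_le_of_coupling hf (ξ := μ.prod ν)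
      (by rwa [Measure.map_fst_prod, measure_univ, one_smul])
      (by rwa [Measure.map_snd_prod, measure_univ, one_smul])
    simpa [Measure.map_fst_prod, Measure.map_snd_prod] using this
  · simp only [W1, ENNReal.mul_iInf_of_ne (coe_ne_zero.2 hL) coe_ne_top]
    refine le_iInf fun ξ => le_iInf fun hξμ => le_iInf fun hξν => ?_
    subst hξμ hξν
    exact enorm_integral_sub_integral_le_of_coupling hf hμ hν

theorem lintegral_edist_le_add_W1 [OpensMeasurableSpace X] (μ ν : Measure X) (y : X) :
    ∫⁻ z, edist y z ∂μ ≤ ∫⁻ z, edist y z ∂ν + W1 μ ν := by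
  simp only [W1, ENNReal.add_iInf]
  refine le_iInf fun ξ => le_iInf fun hξμ => le_iInf fun hξν => ?_
  subst hξμ hξν
  have hm : Measurable fun p : X × X => edist y p.2 := measurable_edist_right.comp measurable_snd
  rw [lintegral_map measurable_edist_right measurable_fst,
    lintegral_map measurable_edist_right measurable_snd, ← lintegral_add_left hm]
  refine lintegral_mono fun p => ?_
  rw [edist_comm p.1 p.2]
  exact edist_triangle _ _ _

end Wasserstein

section Curvature

variable {P : X → Measure X} {κ : ℝ}

theorem PosCurvature.W1_le_edist (hcurv : PosCurvature P κ) (hκ : 0 ≤ κ) (x y : X) :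
    W1 (P x) (P y) ≤ edist x y := by
  refine (hcurv x y).trans ?_
  rw [edist_dist]
  exact ENNReal.ofReal_le_ofReal (mul_le_of_le_one_left dist_nonneg (by linarith))

theorem PosCurvature.lipschitzWith_integral {E : Type*} [NormedAddCommGroup E] [NormedSpace ℝ E]
    [∀ x, IsProbabilityMeasure (P x)] (hcurv : PosCurvature P κ) {f : X → E} {L : ℝ≥0}
    (hf : LipschitzWith L f) (hint : ∀ x, Integrable f (P x)) :
    LipschitzWith (L * Real.toNNReal (1 - κ)) fun x => ∫ y, f y ∂P x := by
  intro x y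
  rw [edist_eq_enorm_sub, ENNReal.coe_mul, mul_assoc]
  refine (enorm_integral_sub_integral_le_mul_W1 hf (hint x) (hint y)).trans ?_
  gcongr
  refine (hcurv x y).trans_eq ?_
  rw [ENNReal.ofReal_mul' dist_nonneg, ← edist_dist]
  rfl

end Curvature

section StepN

variable {Ω : Type*} [MeasurableSpace Ω] {P : Ω → Measure Ω}

theorem measurable_stepN (hP : Measurable P) (n : ℕ) : Measurable (stepN P n) := by
  induction n with
  | zero => exact Measure.measurable_dirac
  | succ n ih => exact (Measure.measurable_bind' hP).comp ih

variable [∀ x, IsProbabilityMeasure (P x)]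

theorem isProbabilityMeasure_stepN (hP : Measurable P) (n : ℕ) (x : Ω) :
    IsProbabilityMeasure (stepN P n x) := by
  induction n with
  | zero => exact Measure.dirac.isProbabilityMeasure
  | succ n ih => exact isProbabilityMeasure_bind hP.aemeasurable (ae_of_all _ ‹_›)

theorem avgN_succ (hP : Measurable P) {n : ℕ} {f : Ω → ℝ} {x : Ω}
    (hf : Integrable f (stepN P (n + 1) x)) :
    avgN P (n + 1) f x = avgN P n (fun w => ∫ z, f z ∂P w) x := by
  have := isProbabilityMeasure_stepN hP n x
  exact integral_bind hP hf

end StepN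

section Chain

variable [OpensMeasurableSpace X] {P : X → Measure X}

theorem lintegral_edist_bind_ne_top (hP : Measurable P)
    (hW : ∀ x y, W1 (P x) (P y) ≤ edist x y) {ν : Measure X} [IsFiniteMeasure ν] {y : X}
    (hν : ∫⁻ z, edist y z ∂ν ≠ ⊤) (hPy : ∫⁻ z, edist y z ∂(P y) ≠ ⊤) :
    ∫⁻ z, edist y z ∂(ν.bind P) ≠ ⊤ := by
  have hstep (w : X) : ∫⁻ z, edist y z ∂(P w) ≤ ∫⁻ z, edist y z ∂(P y) + edist y w :=
    (lintegral_edist_le_add_W1 _ _ y).trans (add_le_add le_rfl ((hW w y).trans_eq (edist_comm _ _)))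
  rw [Measure.lintegral_bind hP.aemeasurable measurable_edist_right.aemeasurable]
  refine ne_top_of_le_ne_top ?_ (lintegral_mono hstep)
  rw [lintegral_add_left measurable_const, lintegral_const]
  exact ENNReal.add_ne_top.2 ⟨ENNReal.mul_ne_top hPy (measure_ne_top _ _), hν⟩

variable [∀ x, IsProbabilityMeasure (P x)]

theorem lintegral_edist_stepN_ne_top (hP : Measurable P)
    (hW : ∀ x y, W1 (P x) (P y) ≤ edist x y) (hmom : ∀ y, ∫⁻ z, edist y z ∂(P y) ≠ ⊤)
    (n : ℕ) (x y : X) : ∫⁻ z, edist y z ∂(stepN P n x) ≠ ⊤ := by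
  induction n with
  | zero => simp [stepN, lintegral_dirac' _ measurable_edist_right]
  | succ n ih =>
    have := isProbabilityMeasure_stepN hP n x
    exact lintegral_edist_bind_ne_top hP hW ih (hmom y)

theorem PosCurvature.lipschitzWith_avgN {κ : ℝ} (hP : Measurable P)
    (hmom : ∀ x y, ∫⁻ z, edist y z ∂(P x) ≠ ⊤) (hκ : 0 ≤ κ) (hcurv : PosCurvature P κ)
    (n : ℕ) {f : X → ℝ} {L : ℝ≥0} (hf : LipschitzWith L f) :
    LipschitzWith (L * Real.toNNReal (1 - κ) ^ n) (avgN P n f) := by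
  induction n generalizing f L with
  | zero =>
    have : avgN P 0 f = f := funext fun x => integral_dirac f x
    simpa [this] using hf
  | succ n ih =>
    have hstep : avgN P (n + 1) f = avgN P n (fun w => ∫ z, f z ∂P w) := by
      funext x
      have := isProbabilityMeasure_stepN hP (n + 1) x
      exact avgN_succ hP (hf.integrable_of_lintegral_edist_ne_top
        (lintegral_edist_stepN_ne_top hP (hcurv.W1_le_edist hκ) (fun y => hmom y y) (n + 1) x x))
    rw [hstep, pow_succ', ← mul_assoc]
    exact ih (hcurv.lipschitzWith_integral hf
      fun x => hf.integrable_of_lintegral_edist_ne_top (hmom x x))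

theorem PosCurvature.lipschitzWith_timeAverage_avgN {κ : ℝ} (hP : Measurable P)
    (hmom : ∀ x y, ∫⁻ z, edist y z ∂(P x) ≠ ⊤) (hκ0 : 0 < κ) (hκ1 : κ ≤ 1)
    (hcurv : PosCurvature P κ) {f : X → ℝ} (hf : LipschitzWith 1 f) (T₀ T : ℕ) :
    LipschitzWith (Real.toNNReal ((1 - κ) ^ (T₀ + 1) / (κ * T)))
      (fun z => (1 / (T : ℝ)) * ∑ k ∈ Finset.range T, avgN P (T₀ + 1 + k) f z) := by
  have hr : 0 ≤ 1 - κ := by linarith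
  have hterm (k : ℕ) (x y : X) :
      |avgN P k f x - avgN P k f y| ≤ (1 - κ) ^ k * dist x y := by
    simpa [Real.coe_toNNReal _ hr, Real.dist_eq] using
      (hcurv.lipschitzWith_avgN hP hmom hκ0.le k hf).dist_le_mul x y
  have hgeom : ∑ k ∈ Finset.range T, (1 - κ) ^ (T₀ + 1 + k) ≤ (1 - κ) ^ (T₀ + 1) / κ := by
    have h := geom_sum_Ico_le_of_lt_one (m := T₀ + 1) (n := T₀ + 1 + T) hr (by linarith)
    rwa [Finset.sum_Ico_eq_sum_range, Nat.add_sub_cancel_left, sub_sub_cancel (1 : ℝ) κ] at h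
  refine LipschitzWith.of_dist_le_mul fun x y => ?_
  rw [Real.coe_toNNReal _ (div_nonneg (pow_nonneg hr _) (by positivity)), Real.dist_eq,
    ← mul_sub, ← Finset.sum_sub_distrib, abs_mul, abs_of_nonneg (by positivity : (0 : ℝ) ≤ 1 / T)]
  calc 1 / (T : ℝ) * |∑ k ∈ Finset.range T, (avgN P (T₀ + 1 + k) f x - avgN P (T₀ + 1 + k) f y)|
      ≤ 1 / T * ((∑ k ∈ Finset.range T, (1 - κ) ^ (T₀ + 1 + k)) * dist x y) := by
        rw [Finset.sum_mul]
        gcongr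
        exact (Finset.abs_sum_le_sum_abs _ _).trans (Finset.sum_le_sum fun k _ => hterm _ x y)
    _ ≤ 1 / T * ((1 - κ) ^ (T₀ + 1) / κ * dist x y) := by gcongr
    _ = (1 - κ) ^ (T₀ + 1) / (κ * T) * dist x y := by ring

end Chain

section Variance

variable [OpensMeasurableSpace X] {μ : Measure X} [IsProbabilityMeasure μ] {g : X → ℝ} {K : ℝ≥0}

theorem LipschitzWith.memLp_two (hg : LipschitzWith K g)
    (hμ2 : Integrable (fun q : X × X => dist q.1 q.2 ^ 2) (μ.prod μ)) : MemLp g 2 μ := by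
  obtain ⟨y, hy⟩ := hμ2.prod_left_ae.exists
  have hdist : MemLp (fun x => dist x y) 2 μ :=
    (memLp_two_iff_integrable_sq (continuous_id.dist continuous_const).aestronglyMeasurable).2 hy
  have hsub : MemLp (fun x => g x - g y) 2 μ :=
    (hdist.const_mul (K : ℝ)).of_le (hg.continuous.sub continuous_const).aestronglyMeasurable
      (ae_of_all _ fun x => by
        simpa [Real.dist_eq, abs_of_nonneg dist_nonneg] using hg.dist_le_mul x y)
  simpa [Pi.add_def] using hsub.add (memLp_const (g y))

theorem LipschitzWith.variance_le (hg : LipschitzWith K g)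
    (hμ2 : Integrable (fun q : X × X => dist q.1 q.2 ^ 2) (μ.prod μ)) :
    Var[g; μ] ≤ K ^ 2 / 2 * ∫ q, dist q.1 q.2 ^ 2 ∂(μ.prod μ) := by
  have hg2 := hg.memLp_two hμ2
  have hsq (q : X × X) : (g q.1 - g q.2) ^ 2 ≤ K ^ 2 * dist q.1 q.2 ^ 2 := by
    rw [← sq_abs, ← Real.dist_eq, ← mul_pow]
    exact pow_le_pow_left₀ dist_nonneg (hg.dist_le_mul _ _) 2
  -- `g(X) - g(Y)` for independent copies `X, Y ∼ μ` has twice the variance of `g`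
  have hcopies : 2 * Var[g; μ] = Var[fun q : X × X => g q.1 + (-g) q.2; μ.prod μ] := by
    rw [variance_add_prod hg2 hg2.neg, variance_neg]
    ring
  have hsecond : Var[fun q : X × X => g q.1 + (-g) q.2; μ.prod μ] ≤
      ∫ q, (g q.1 - g q.2) ^ 2 ∂(μ.prod μ) := by
    refine (variance_le_expectation_sq ((hg2.comp_fst μ).add (hg2.neg.comp_snd μ)).1).trans_eq ?_
    simp [sub_eq_add_neg]
  have hbound : ∫ q, (g q.1 - g q.2) ^ 2 ∂(μ.prod μ) ≤
      K ^ 2 * ∫ q, dist q.1 q.2 ^ 2 ∂(μ.prod μ) := by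
    rw [← integral_const_mul]
    exact integral_mono_of_nonneg (ae_of_all _ fun q => sq_nonneg _) (hμ2.const_mul _)
      (ae_of_all _ hsq)
  linarith

end Variance

theorem variance_of_randomized_starting_point_general
    [BorelSpace X]
    (P : X → Measure X) (hPmeas : Measurable P)
    (hPprob : ∀ x, IsProbabilityMeasure (P x))
    (hPmom : ∀ x y : X, (∫⁻ z, edist y z ∂(P x)) ≠ ⊤)
    (κ : ℝ) (hκ0 : 0 < κ) (hκ1 : κ ≤ 1) (hcurv : PosCurvature P κ)
    (μ : Measure X) (hμprob : IsProbabilityMeasure μ)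
    (hμ2 : Integrable (fun q : X × X => dist q.1 q.2 ^ 2) (μ.prod μ))
    (f : X → ℝ) (hf : LipschitzWith 1 f)
    (T₀ T : ℕ) :
    (∫ z, ((1 / (T : ℝ)) * ∑ k ∈ Finset.range T, avgN P (T₀ + 1 + k) f z
        - ∫ w, (1 / (T : ℝ)) * ∑ k ∈ Finset.range T, avgN P (T₀ + 1 + k) f w ∂μ) ^ 2 ∂μ)
      ≤ ((1 - κ) ^ (2 * (T₀ + 1)) / (2 * κ ^ 2 * (T : ℝ) ^ 2)) *
          ∫ q, dist q.1 q.2 ^ 2 ∂(μ.prod μ) := by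
  have := hPprob
  have hg := hcurv.lipschitzWith_timeAverage_avgN hPmeas hPmom hκ0 hκ1 hf T₀ T
  rw [← variance_eq_integral hg.continuous.aemeasurable]
  refine (hg.variance_le hμ2).trans_eq ?_
  rw [Real.coe_toNNReal _ (div_nonneg (pow_nonneg (by linarith) _) (by positivity))]
  ring

/-- **Variance due to a randomized starting point** (Section 1.2 of Joulin–Ollivier):
under positive Ricci curvature `κ ∈ (0,1]`, for `μ` with finite second moment of the
distance, `f` 1-Lipschitz and `g(x) = E_x π̂(f) = (1/T) ∑_{k=T₀+1}^{T₀+T} P^k f(x)`,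
`Var_{X₀∼μ} g(X₀) ≤ ((1−κ)^{2(T₀+1)}/(2κ²T²)) ∬ d(x,y)² μ(dx)μ(dy)`. -/
theorem variance_of_randomized_starting_point
    [CompleteSpace X] [SecondCountableTopology X] [BorelSpace X]
    (P : X → Measure X) (hPmeas : Measurable P)
    (hPprob : ∀ x, IsProbabilityMeasure (P x))
    (hPmom : ∀ x y : X, (∫⁻ z, edist y z ∂(P x)) ≠ ⊤)
    (κ : ℝ) (hκ0 : 0 < κ) (hκ1 : κ ≤ 1) (hcurv : PosCurvature P κ)
    (μ : Measure X) (hμprob : IsProbabilityMeasure μ)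
    (hμ2 : Integrable (fun q : X × X => dist q.1 q.2 ^ 2) (μ.prod μ))
    (f : X → ℝ) (hf : LipschitzWith 1 f)
    (T₀ T : ℕ) (hT : 1 ≤ T) :
    (∫ z, ((1 / (T : ℝ)) * ∑ k ∈ Finset.range T, avgN P (T₀ + 1 + k) f z
        - ∫ w, (1 / (T : ℝ)) * ∑ k ∈ Finset.range T, avgN P (T₀ + 1 + k) f w ∂μ) ^ 2 ∂μ)
      ≤ ((1 - κ) ^ (2 * (T₀ + 1)) / (2 * κ ^ 2 * (T : ℝ) ^ 2)) *
          ∫ q, dist q.1 q.2 ^ 2 ∂(μ.prod μ) :=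
  variance_of_randomized_starting_point_general P hPmeas hPprob hPmom κ hκ0 hκ1 hcurv μ hμprob hμ2 f
    hf T₀ T

end
end

section
/- Curvature of the lazy random-bit-update walk on the discrete cube: let 𝒳 = {0,1}^N with the Hamming distance d (the number of coordinates at which two sequences differ), and consider the Markov kernel given by P_x({x}) = 1/2 and P_x({(x₁,…,1−x_i,…,x_N)}) = 1/(2N) for each 1 ≤ i ≤ N (choose a uniformly random position and replace its bit by an independent fair coin). Then this chain has positive Ricci curvature κ = 1/N; in particular W₁(P_x, P_y) ≤ (1 − 1/N) d(x,y) for all x, y ∈ {0,1}^N. -/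
open MeasureTheory ENNReal
open scoped NNReal

noncomputable section

variable {X : Type*} [MetricSpace X] [MeasurableSpace X]

/-- The space of `N`-bit sequences with the Hamming distance. -/
abbrev Cube (N : ℕ) := Hamming (fun _ : Fin N => Bool)

instance (N : ℕ) : MeasurableSpace (Cube N) := ⊤

/-- Flip the `i`-th bit of `x`. -/
def flipBit {N : ℕ} (x : Cube N) (i : Fin N) : Cube N :=
  Hamming.toHamming (Function.update (Hamming.ofHamming x) i (!(Hamming.ofHamming x i)))

/-- The lazy random-bit-update walk on the discrete cube: with probability `1/2` stay,
and with probability `1/(2N)` flip the `i`-th bit, for each `i`. -/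
def cubeKernel (N : ℕ) : Cube N → Measure (Cube N) := fun x =>
  (1 / 2 : ℝ≥0∞) • Measure.dirac x
    + ∑ i : Fin N, (1 / (2 * (N : ℝ≥0∞))) • Measure.dirac (flipBit x i)

/-!
Resampling bit `i` of `x` and of `y` with the same fair coin (the synchronous coupling) makes
them agree at `i` and changes nothing else, so after one step the expected distance is
`(1/N) ∑ᵢ (d(x,y) - [xᵢ ≠ yᵢ]) = (1 - 1/N) d(x,y)`. For neighbours `y = flip_i x` this is optimal:
the `1`-Lipschitz function `d(·, y)` has mean `1/2 + (N-1)/N` under `P_x` and `1/2` under `P_y`.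
-/

theorem W1_le_lintegral_of_coupling {μ ν : Measure X} {ξ : Measure (X × X)}
    (hξ₁ : ξ.map Prod.fst = μ) (hξ₂ : ξ.map Prod.snd = ν) :
    W1 μ ν ≤ ∫⁻ p, edist p.1 p.2 ∂ξ :=
  iInf₂_le_of_le ξ hξ₁ (iInf_le _ hξ₂)

theorem W1_sum_dirac_le [MeasurableSingletonClass X] {ι : Type*} (s : Finset ι)
    (w : ι → ℝ≥0∞) (f g : ι → X) :
    W1 (∑ k ∈ s, w k • Measure.dirac (f k)) (∑ k ∈ s, w k • Measure.dirac (g k))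
      ≤ ∑ k ∈ s, w k * edist (f k) (g k) := by
  let ξ : Measure (X × X) := ∑ k ∈ s, w k • Measure.dirac (f k, g k)
  have hmap {π : X × X → X} (hπ : Measurable π) :
      ξ.map π = ∑ k ∈ s, w k • Measure.dirac (π (f k, g k)) := by
    simp only [ξ, Measure.map_finset_sum hπ.aemeasurable, Measure.map_smul,
      Measure.map_dirac' hπ]
  calc _ ≤ ∫⁻ p, edist p.1 p.2 ∂ξ :=
        W1_le_lintegral_of_coupling (hmap measurable_fst) (hmap measurable_snd)
    _ = _ := by simp [ξ, lintegral_finsetSum_measure]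

theorem lintegral_sub_lintegral_le_W1 {f : X → ℝ≥0∞} (hf : Measurable f)
    (hf_lip : ∀ x y, f x ≤ edist x y + f y) (μ ν : Measure X) :
    ∫⁻ x, f x ∂μ - ∫⁻ x, f x ∂ν ≤ W1 μ ν := by
  refine le_iInf fun ξ => le_iInf fun hξ₁ => le_iInf fun hξ₂ => ?_
  rw [← hξ₁, ← hξ₂, lintegral_map hf measurable_fst, lintegral_map hf measurable_snd]
  exact (lintegral_sub_le _ _ (hf.comp measurable_snd)).trans
    (lintegral_mono fun p => tsub_le_iff_right.mpr (hf_lip p.1 p.2))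

section Hamming

variable {ι β : Type*} [Fintype ι] [DecidableEq ι] [DecidableEq β]

theorem hammingDist_update_update_add (f g : ι → β) (i : ι) (b : β) :
    hammingDist (Function.update f i b) (Function.update g i b)
      + (if f i ≠ g i then 1 else 0) = hammingDist f g := by
  have hsupp : ({j | Function.update f i b j ≠ Function.update g i b j} : Finset ι)
      = ({j | f j ≠ g j} : Finset ι).erase i := by
    ext j
    by_cases hj : j = i <;> simp [hj]
  rw [hammingDist, hsupp]
  split_ifs with hi
  · exact Finset.card_erase_add_one (by simpa using hi)
  · rw [Finset.erase_eq_of_notMem (by simpa using hi), add_zero, hammingDist]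

theorem sum_hammingDist_update_update (f g : ι → β) (b : β) :
    ∑ i, hammingDist (Function.update f i b) (Function.update g i b)
      = (Fintype.card ι - 1) * hammingDist f g := by
  have hsum := Finset.sum_congr rfl fun i (_ : i ∈ Finset.univ) =>
    hammingDist_update_update_add f g i b
  rw [Finset.sum_add_distrib, ← Finset.card_filter, Finset.sum_const, Finset.card_univ,
    smul_eq_mul] at hsum
  rw [Nat.sub_one_mul, ← hsum, hammingDist, Nat.add_sub_cancel]

theorem hammingDist_update_not_self (f : ι → Bool) (i : ι) :
    hammingDist (Function.update f i (!f i)) f = 1 := by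
  rw [hammingDist, Finset.card_eq_one]
  refine ⟨i, Finset.ext fun j => ?_⟩
  by_cases hj : j = i <;> simp [hj]

theorem hammingDist_update_not_update_not (f : ι → Bool) {i j : ι} (hij : i ≠ j) :
    hammingDist (Function.update f i (!f i)) (Function.update f j (!f j)) = 2 := by
  rw [hammingDist, ← Finset.card_pair hij]
  congr 1
  ext k
  by_cases hki : k = i <;> by_cases hkj : k = j <;> simp_all [Function.update_apply]

end Hamming

theorem Hamming.edist_eq_hammingDist {ι : Type*} {β : ι → Type*} [Fintype ι]
    [∀ i, DecidableEq (β i)] (x y : Hamming β) :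
    edist x y = hammingDist (ofHamming x) (ofHamming y) := by
  rw [edist_nndist, nndist_eq_hammingDist, ENNReal.coe_natCast]

theorem ENNReal.inv_two_mul_mul_two_mul (a b : ℝ≥0∞) : (2 * a)⁻¹ * (2 * b) = b / a := by
  rw [ENNReal.mul_inv (by simp) (by simp), mul_mul_mul_comm,
    ENNReal.inv_mul_cancel two_ne_zero ENNReal.ofNat_ne_top, one_mul, ENNReal.div_eq_inv_mul]

theorem ENNReal.natCast_mul_inv_two_mul {n : ℕ} (hn : n ≠ 0) :
    (n : ℝ≥0∞) * (2 * (n : ℝ≥0∞))⁻¹ = 2⁻¹ := by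
  rw [ENNReal.mul_inv (by simp) (by simp), mul_left_comm,
    ENNReal.mul_inv_cancel (by exact_mod_cast hn) (ENNReal.natCast_ne_top n), mul_one]

theorem ENNReal.ofReal_one_sub_inv_mul {n : ℕ} (hn : 1 ≤ n) (d : ℕ) :
    ENNReal.ofReal ((1 - 1 / (n : ℝ)) * d) = (((n - 1) * d : ℕ) : ℝ≥0∞) / n := by
  have hn' : (0 : ℝ) < n := by exact_mod_cast hn
  rw [← ENNReal.ofReal_natCast, ← ENNReal.ofReal_natCast n, ← ENNReal.ofReal_div_of_pos hn']
  congr 1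
  push_cast [Nat.cast_sub hn]
  field_simp

instance (N : ℕ) : DiscreteMeasurableSpace (Cube N) :=
  ⟨fun _ => MeasurableSpace.measurableSet_top⟩

namespace Cube

open Hamming

variable {N : ℕ}

def setBit (x : Cube N) (i : Fin N) (b : Bool) : Cube N :=
  toHamming (Function.update (ofHamming x) i b)

theorem sum_dirac_setBit (x : Cube N) (i : Fin N) :
    ∑ b, Measure.dirac (setBit x i b) = Measure.dirac x + Measure.dirac (flipBit x i) := by
  have hsum (c : Bool) : ∑ b, Measure.dirac (setBit x i b)
      = Measure.dirac (setBit x i c) + Measure.dirac (setBit x i (!c)) := by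
    cases c <;> simp [add_comm]
  have hx : setBit x i (ofHamming x i) = x := by simp [setBit]
  rw [hsum (ofHamming x i), hx]
  rfl

theorem cubeKernel_eq_sum_setBit (hN : 1 ≤ N) (x : Cube N) :
    cubeKernel N x
      = ∑ p : Fin N × Bool, (2 * (N : ℝ≥0∞))⁻¹ • Measure.dirac (setBit x p.1 p.2) := by
  simp only [Fintype.sum_prod_type, ← Finset.smul_sum, sum_dirac_setBit, smul_add,
    Finset.sum_add_distrib, Finset.sum_const, Finset.card_univ, Fintype.card_fin, cubeKernel,
    one_div]
  rw [← Nat.cast_smul_eq_nsmul ℝ≥0∞, smul_smul, mul_comm (2 * (N : ℝ≥0∞))⁻¹,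
    ENNReal.natCast_mul_inv_two_mul (Nat.one_le_iff_ne_zero.mp hN)]

theorem W1_cubeKernel_le (hN : 1 ≤ N) (x y : Cube N) :
    W1 (cubeKernel N x) (cubeKernel N y) ≤ ENNReal.ofReal ((1 - 1 / (N : ℝ)) * dist x y) := by
  have hcost : ∑ p : Fin N × Bool, edist (setBit x p.1 p.2) (setBit y p.1 p.2)
      = 2 * ((N - 1) * hammingDist (ofHamming x) (ofHamming y) : ℕ) := by
    simp only [Fintype.sum_prod_type_right, setBit, edist_eq_hammingDist, ofHamming_toHamming,
      ← Nat.cast_sum, sum_hammingDist_update_update, Fintype.card_fin, Fintype.sum_bool, two_mul,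
      Nat.cast_add]
  rw [cubeKernel_eq_sum_setBit hN, cubeKernel_eq_sum_setBit hN, dist_eq_hammingDist,
    ENNReal.ofReal_one_sub_inv_mul hN, ← ENNReal.inv_two_mul_mul_two_mul, ← hcost,
    Finset.mul_sum]
  exact W1_sum_dirac_le _ _ _ _

theorem edist_flipBit_self (x : Cube N) (i : Fin N) : edist (flipBit x i) x = 1 := by
  simp [flipBit, edist_eq_hammingDist, hammingDist_update_not_self]

theorem flipBit_ne_self (x : Cube N) (i : Fin N) : flipBit x i ≠ x := by
  intro h
  simpa [h] using edist_flipBit_self x i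

theorem edist_flipBit_flipBit (x : Cube N) {i j : Fin N} (hij : i ≠ j) :
    edist (flipBit x i) (flipBit x j) = 2 := by
  simp [flipBit, edist_eq_hammingDist, hammingDist_update_not_update_not _ hij]

theorem lintegral_cubeKernel (x : Cube N) (g : Cube N → ℝ≥0∞) :
    ∫⁻ z, g z ∂cubeKernel N x = 2⁻¹ * g x + ∑ i, (2 * (N : ℝ≥0∞))⁻¹ * g (flipBit x i) := by
  simp [cubeKernel, lintegral_finsetSum_measure]

theorem W1_cubeKernel_flipBit (hN : 1 ≤ N) (x : Cube N) (i : Fin N) :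
    W1 (cubeKernel N x) (cubeKernel N (flipBit x i))
      = ENNReal.ofReal ((1 - 1 / (N : ℝ)) * dist x (flipBit x i)) := by
  set y := flipBit x i
  have hdist : dist x y = ((1 : ℕ) : ℝ) := by
    rw [dist_edist, edist_comm, edist_flipBit_self, ENNReal.toReal_one, Nat.cast_one]
  refine le_antisymm (W1_cubeKernel_le hN x y) ?_
  have hx : ∫⁻ z, edist z y ∂cubeKernel N x
      = 2⁻¹ + (2 * (N : ℝ≥0∞))⁻¹ * (2 * (N - 1 : ℕ)) := by
    have hsum : ∑ j, edist (flipBit x j) y = 2 * (N - 1 : ℕ) := by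
      rw [← Finset.sum_erase_add _ _ (Finset.mem_univ i), edist_self, add_zero,
        Finset.sum_congr rfl fun j hj => edist_flipBit_flipBit x (Finset.ne_of_mem_erase hj),
        Finset.sum_const, Finset.card_erase_of_mem (Finset.mem_univ i), Finset.card_univ,
        Fintype.card_fin, nsmul_eq_mul, mul_comm]
    rw [lintegral_cubeKernel, ← Finset.mul_sum, hsum, edist_comm, edist_flipBit_self, mul_one]
  have hy : ∫⁻ z, edist z y ∂cubeKernel N y = 2⁻¹ := by
    simp only [lintegral_cubeKernel, edist_self, mul_zero, zero_add, edist_flipBit_self, mul_one,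
      Finset.sum_const, Finset.card_univ, Fintype.card_fin, nsmul_eq_mul,
      ENNReal.natCast_mul_inv_two_mul (Nat.one_le_iff_ne_zero.mp hN)]
  calc ENNReal.ofReal ((1 - 1 / (N : ℝ)) * dist x y)
      = (2 * (N : ℝ≥0∞))⁻¹ * (2 * (N - 1 : ℕ)) := by
        rw [hdist, ENNReal.ofReal_one_sub_inv_mul hN, ENNReal.inv_two_mul_mul_two_mul, mul_one]
    _ = ∫⁻ z, edist z y ∂cubeKernel N x - ∫⁻ z, edist z y ∂cubeKernel N y := by
        rw [hx, hy, ENNReal.add_sub_cancel_left (by simp)]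
    _ ≤ _ := lintegral_sub_lintegral_le_W1 .of_discrete (fun z w => edist_triangle z w y) _ _

end Cube

/-- **Curvature of the lazy random-bit-update walk on the discrete cube** (Example 8 of
Ollivier, Section 2.1 of Joulin–Ollivier): this chain has Ricci curvature `κ = 1/N`;
in particular `W₁(P_x,P_y) ≤ (1 − 1/N) d(x,y)` for all `x, y`, with equality for some
pair of distinct points. -/
theorem cube_walk_curvature (N : ℕ) (hN : 1 ≤ N) :
    (∀ x y : Cube N,
      W1 (cubeKernel N x) (cubeKernel N y)
        ≤ ENNReal.ofReal ((1 - 1 / (N : ℝ)) * dist x y)) ∧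
    (∃ x y : Cube N, x ≠ y ∧
      W1 (cubeKernel N x) (cubeKernel N y)
        = ENNReal.ofReal ((1 - 1 / (N : ℝ)) * dist x y)) := by
  let x : Cube N := Hamming.toHamming fun _ => false
  let i : Fin N := ⟨0, hN⟩
  exact ⟨Cube.W1_cubeKernel_le hN, x, flipBit x i, (Cube.flipBit_ne_self x i).symm,
    Cube.W1_cubeKernel_flipBit hN x i⟩
end
end
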